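/- arXiv:2512.08675 — 2 statements merged into one kernel-verified Lean document; each statement's English description precedes it below -/
import Mathlib

section
/- Every uniformly controlled gate LU(χ) = ∑_c |c⟩⟨c| ⊗ U(χ_c) with targets in an Abelian divisible group satisfies the frequency-domain factorization: LU(χ) = (I ⊗ U(Y_0)) · ∏_{ω=1}^{2^n−1} ∑_c |c⟩⟨c| ⊗ (U(Y_ω) if c·ω = 1, else I), where X_ω = ∑_i (−1)^{ω·i} χ_i, Y_0 = (1/2^n)∑_ω X_ω, and Y_ω = −(2/2^n) X_ω for ω ≠ 0. -/
/-! The map `A ↦ ∑ c, |c⟩⟨c| ⊗ A c` is a ring homomorphism on `ι → Matrix m m R` (the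
block-diagonal embedding up to reordering the index), so the product of the controlled factors
is controlled by the pointwise products; as `U` turns sums into products, the claim reduces, for
each control value `c`, to the identity `χ c = Y 0 + ∑_{c·ω = 1} Y ω` in `D`. Since
`[c·ω = 1] = (1 - (-1)^{c·ω}) / 2`, this is the inversion formula `χ = 2⁻ⁿ H X` for
the Walsh–Hadamard matrix `H`, i.e. the orthogonality `∑_ω (-1)^{c·ω} (-1)^{ω·i} = 2ⁿ δ_{ci}`. -/

open Matrix Kronecker

/-- Mod-2 inner product of the `n`-bit binary expansions of `a` and `b`. -/
def bip (n a b : ℕ) : ℕ :=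
  (∑ j ∈ Finset.range n, (Nat.testBit a j && Nat.testBit b j).toNat) % 2

/-- `(-1)^{a·b}` as an integer sign. -/
def wsign (n a b : ℕ) : ℤ :=
  (-1) ^ (∑ j ∈ Finset.range n, (Nat.testBit a j && Nat.testBit b j).toNat)

lemma wsign_comm (n a b : ℕ) : wsign n a b = wsign n b a := by
  simp [wsign, Bool.and_comm]

lemma wsign_zero_left (n b : ℕ) : wsign n 0 b = 1 := by
  simp [wsign]

lemma wsign_eq_prod (n a b : ℕ) :
    wsign n a b = ∏ j ∈ Finset.range n, (-1 : ℤ) ^ (a.testBit j && b.testBit j).toNat :=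
  (Finset.prod_pow_eq_pow_sum _ _ _).symm

lemma wsign_xor_right (n a b c : ℕ) : wsign n a (b ^^^ c) = wsign n a b * wsign n a c := by
  simp only [wsign_eq_prod, ← Finset.prod_mul_distrib, Nat.testBit_xor]
  refine Finset.prod_congr rfl fun j _ => ?_
  cases a.testBit j <;> cases b.testBit j <;> cases c.testBit j <;> rfl

lemma wsign_xor_left (n a b c : ℕ) : wsign n (a ^^^ b) c = wsign n a c * wsign n b c := by
  rw [wsign_comm, wsign_xor_right, wsign_comm n c, wsign_comm n c]

lemma wsign_two_pow_right {n j : ℕ} (hj : j < n) (a : ℕ) :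
    wsign n a (2 ^ j) = (-1) ^ (a.testBit j).toNat := by
  rw [wsign, Finset.sum_eq_single j (fun k _ hk => by simp [Ne.symm hk])
    (fun h => absurd (Finset.mem_range.mpr hj) h)]
  simp

lemma wsign_eq_one_sub_two_mul_bip (n a b : ℕ) : wsign n a b = 1 - 2 * (bip n a b : ℤ) := by
  rw [wsign, neg_one_pow_eq_pow_mod_two, bip]
  rcases Nat.mod_two_eq_zero_or_one
    (∑ j ∈ Finset.range n, (a.testBit j && b.testBit j).toNat) with h | h <;> simp [h]

lemma bip_zero_right (n a : ℕ) : bip n a 0 = 0 := by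
  simp [bip]

lemma bip_eq_zero_or_one (n a b : ℕ) : bip n a b = 0 ∨ bip n a b = 1 :=
  Nat.mod_two_eq_zero_or_one _

/-- Flipping bit `j` of `ω` pairs off the terms of opposite sign. -/
lemma sum_wsign_eq_zero {n a j : ℕ} (hj : j < n) (ha : a.testBit j) :
    ∑ ω : Fin (2 ^ n), wsign n a ω = 0 := by
  have hflip (ω : Fin (2 ^ n)) : (ω : ℕ) ^^^ 2 ^ j < 2 ^ n :=
    Nat.xor_lt_two_pow ω.isLt (Nat.pow_lt_pow_right one_lt_two hj)
  refine Finset.sum_involution (fun ω _ => ⟨ω ^^^ 2 ^ j, hflip ω⟩) (fun ω _ => ?_)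
    (fun ω _ _ h => ?_) (fun _ _ => Finset.mem_univ _) (fun ω _ => ?_)
  · simp [wsign_xor_right, wsign_two_pow_right hj, ha]
  · simpa using congrArg Fin.val h
  · ext; simp

lemma sum_wsign_mul_wsign {n : ℕ} (c i : Fin (2 ^ n)) :
    ∑ ω : Fin (2 ^ n), wsign n c ω * wsign n ω i = if c = i then 2 ^ n else 0 := by
  simp_rw [wsign_comm n _ (i : ℕ), ← wsign_xor_left]
  split_ifs with hci
  · simp [hci, wsign_zero_left]
  · obtain ⟨j, hj⟩ :=
      Nat.exists_testBit_of_ne_zero (xor_eq_zero_iff.not.mpr (Fin.val_ne_of_ne hci))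
    refine sum_wsign_eq_zero (lt_of_not_ge fun hnj => ?_) hj
    rw [Nat.testBit_lt_two_pow ((Nat.xor_lt_two_pow c.isLt i.isLt).trans_le
      (Nat.pow_le_pow_right two_pos hnj))] at hj
    exact Bool.false_ne_true hj

lemma sum_wsign_smul_sum_wsign_smul {D : Type*} [AddCommGroup D] {n : ℕ}
    (χ : Fin (2 ^ n) → D) (c : Fin (2 ^ n)) :
    ∑ ω : Fin (2 ^ n), wsign n c ω • ∑ i : Fin (2 ^ n), wsign n ω i • χ i =
      (2 ^ n : ℤ) • χ c := by
  simp_rw [Finset.smul_sum, smul_smul]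
  rw [Finset.sum_comm]
  simp_rw [← Finset.sum_smul, sum_wsign_mul_wsign, ite_smul, zero_smul]
  simp

lemma add_sum_ite_bip_eq {D : Type*} [AddCommGroup D] [Module ℚ D] {n : ℕ}
    (χ X Y : Fin (2 ^ n) → D)
    (hX : ∀ ω : Fin (2 ^ n), X ω = ∑ i : Fin (2 ^ n), wsign n ω i • χ i)
    (hY0 : Y 0 = ((2 ^ n : ℚ)⁻¹) • ∑ ω : Fin (2 ^ n), X ω)
    (hY : ∀ ω : Fin (2 ^ n), ω ≠ 0 → Y ω = (-(2 / 2 ^ n : ℚ)) • X ω)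
    (c : Fin (2 ^ n)) :
    Y 0 + ∑ ω : Fin (2 ^ n), (if bip n c ω = 1 then Y ω else 0) = χ c := by
  have hterm (ω : Fin (2 ^ n)) :
      (if bip n c ω = 1 then Y ω else 0) = (-(2 / 2 ^ n : ℚ) * bip n c ω) • X ω := by
    by_cases hω : ω = 0
    · simp [hω, bip_zero_right]
    · rcases bip_eq_zero_or_one n c ω with h | h
      · simp [h]
      · rw [h, hY ω hω]
        simp
  calc Y 0 + ∑ ω : Fin (2 ^ n), (if bip n c ω = 1 then Y ω else 0)
      = (2 ^ n : ℚ)⁻¹ • ∑ ω : Fin (2 ^ n), wsign n c ω • X ω := by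
        rw [hY0, Finset.sum_congr rfl fun ω _ => hterm ω, Finset.smul_sum, Finset.smul_sum,
          ← Finset.sum_add_distrib]
        refine Finset.sum_congr rfl fun ω _ => ?_
        rw [← Int.cast_smul_eq_zsmul ℚ, smul_smul, ← add_smul, wsign_eq_one_sub_two_mul_bip]
        push_cast
        congr 1
        ring
    _ = χ c := by
        simp_rw [hX, sum_wsign_smul_sum_wsign_smul, ← Int.cast_smul_eq_zsmul ℚ, smul_smul]
        simp

section UniformlyControlled

variable {ι m R : Type*} [Fintype ι] [DecidableEq ι] [Fintype m] [DecidableEq m] [CommSemiring R]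

def uniformlyControlled : (ι → Matrix m m R) →+* Matrix (ι × m) (ι × m) R :=
  (reindexAlgEquiv R R (Equiv.prodComm m ι)).toRingHom.comp (blockDiagonalRingHom m ι R)

lemma uniformlyControlled_eq_sum (A : ι → Matrix m m R) :
    uniformlyControlled A = ∑ c, single c c (1 : R) ⊗ₖ A c := by
  ext ⟨i, k⟩ ⟨j, l⟩
  simp [uniformlyControlled, blockDiagonal_apply, Matrix.sum_apply, single_apply, ite_and]

lemma one_kronecker_eq_uniformlyControlled (M : Matrix m m R) :
    (1 : Matrix ι ι R) ⊗ₖ M = uniformlyControlled fun _ => M := by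
  ext ⟨i, k⟩ ⟨j, l⟩
  simp [uniformlyControlled, blockDiagonal_apply, one_apply]

end UniformlyControlled

lemma map_list_sum_map_of_map_add {α M N : Type*} [AddMonoid M] [Monoid N] {f : M → N}
    (h0 : f 0 = 1) (hadd : ∀ a b, f (a + b) = f a * f b) (g : α → M) (l : List α) :
    f (l.map g).sum = (l.map fun a => f (g a)).prod := by
  induction l with
  | nil => exact h0
  | cons a l ih => rw [List.map_cons, List.sum_cons, hadd, ih, List.map_cons, List.prod_cons]

lemma sum_map_filter_finRange {M : Type*} [AddCommMonoid M] {N : ℕ} (p : Fin N → Bool)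
    (g : Fin N → M) : (((List.finRange N).filter p).map g).sum = ∑ ω with p ω, g ω := by
  rw [← List.sum_toFinset _ ((List.nodup_finRange N).filter _)]
  congr 1
  ext
  simp

/-- frequency-domain factorization of a uniformly controlled gate:
`LU(χ) = (I ⊗ U(Y_0)) · ∏_{ω=1}^{2^n−1} ∑_c |c⟩⟨c| ⊗ (U(Y_ω) if c·ω = 1 else I)`,
where `X_ω = ∑_i (−1)^{ω·i} χ_i`, `Y_0 = (1/2^n) ∑_ω X_ω`, and
`Y_ω = −(2/2^n) X_ω` for `ω ≠ 0` (factors taken in increasing order of `ω`;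
they all commute). -/
theorem stmt9 {D : Type*} [AddCommGroup D] [Module ℚ D] {n m : ℕ}
    (U : D → Matrix (Fin m) (Fin m) ℂ)
    (hUmem : ∀ a : D, U a ∈ Matrix.unitaryGroup (Fin m) ℂ)
    (hUhom : ∀ a b : D, U (a + b) = U a * U b)
    (χ X Y : Fin (2 ^ n) → D)
    (hX : ∀ ω : Fin (2 ^ n), X ω = ∑ i : Fin (2 ^ n), wsign n (ω : ℕ) (i : ℕ) • χ i)
    (hY0 : Y 0 = ((2 ^ n : ℚ)⁻¹) • ∑ ω : Fin (2 ^ n), X ω)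
    (hY : ∀ ω : Fin (2 ^ n), ω ≠ 0 → Y ω = (-(2 / 2 ^ n : ℚ)) • X ω) :
    (∑ c : Fin (2 ^ n), (Matrix.single c c (1 : ℂ)) ⊗ₖ U (χ c)) =
      ((1 : Matrix (Fin (2 ^ n)) (Fin (2 ^ n)) ℂ) ⊗ₖ U (Y 0)) *
        (((List.finRange (2 ^ n)).filter (fun ω => ω ≠ 0)).map
          (fun ω : Fin (2 ^ n) =>
            ∑ c : Fin (2 ^ n), (Matrix.single c c (1 : ℂ)) ⊗ₖ
              (if bip n (c : ℕ) (ω : ℕ) = 1 then U (Y ω)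
               else (1 : Matrix (Fin m) (Fin m) ℂ)))).prod := by
  have hU0 : U 0 = 1 :=
    (Unitary.isUnit_coe (U := ⟨U 0, hUmem 0⟩)).mul_eq_left.mp (by rw [← hUhom, add_zero])
  simp_rw [← uniformlyControlled_eq_sum, one_kronecker_eq_uniformlyControlled]
  rw [← Function.comp_def uniformlyControlled, List.prod_map_hom, ← map_mul]
  congr 1
  funext c
  have hfactor (ω : Fin (2 ^ n)) :
      (if bip n c ω = 1 then U (Y ω) else 1) = U (if bip n c ω = 1 then Y ω else 0) := by
    split_ifs <;> simp [hU0]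
  rw [Pi.mul_apply, Pi.list_prod_apply, List.map_map]
  simp_rw [Function.comp_def, hfactor, ← map_list_sum_map_of_map_add hU0 hUhom, ← hUhom,
    sum_map_filter_finRange]
  rw [Finset.sum_filter_of_ne fun ω _ h => ?_, add_sum_ite_bip_eq χ X Y hX hY0 hY c]
  refine decide_eq_true fun hω => h ?_
  simp [hω, bip_zero_right]
end

section
/- Any diagonal unitary Λ(χ) = ∑_{c=0}^{2^n−1} e^{iχ_c} |c⟩⟨c| factors as a global phase e^{iY_0} times a product over nonzero ω of diagonal operators ∑_c e^{i·Y_ω·[c·ω=1]} |c⟩⟨c|, where X_ω = ∑_i (−1)^{ω·i} χ_i, Y_0 = (1/2^n)∑_ω X_ω, Y_ω = −(2/2^n)X_ω for ω ≠ 0. -/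
open Matrix Complex

/-- `(-1)^{a·b}` as a real sign. -/
def wsignR (n a b : ℕ) : ℝ :=
  (-1) ^ (∑ j ∈ Finset.range n, (Nat.testBit a j && Nat.testBit b j).toNat)

/-!
The signs `(-1)^{c·ω}` are the characters of `(ℤ/2)ⁿ`, so they are orthogonal: for `d ≠ 0`,
flipping a bit of `ω` on which `d` is set pairs the terms of `∑_ω (-1)^{ω·d}` with opposite
signs. Hence the Walsh–Hadamard transform inverts itself up to `2ⁿ`, and with
`(-1)^{c·ω} = 1 - 2[c·ω = 1]` the inversion formula reads `χ_c = Y_0 + ∑_{ω ≠ 0} Y_ω [c·ω = 1]`.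
Exponentiating entrywise turns this sum of phases into the product of diagonal matrices.
-/

theorem List.prod_map_filter_ne_of_eq_one {α M : Type*} [CommMonoid M] [DecidableEq α]
    (l : List α) {a : α} {f : α → M} (ha : f a = 1) :
    ((l.filter (· ≠ a)).map f).prod = (l.map f).prod := by
  conv_rhs => rw [← prod_map_filter_mul_prod_map_filter_not (· ≠ a)]
  rw [prod_eq_one (l := (l.filter fun x => ¬x ≠ a).map f) (by simp +contextual [ha]), mul_one]

theorem Matrix.list_prod_map_diagonal {α m R : Type*} [Fintype m] [DecidableEq m] [Semiring R]
    (l : List α) (f : α → m → R) :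
    (l.map fun a => diagonal (f a)).prod = diagonal fun c => (l.map fun a => f a c).prod := by
  induction l with
  | nil => simp [← diagonal_one]
  | cons a l ih => simp [ih, diagonal_mul_diagonal]

namespace Walsh

open Finset

theorem wsignR_eq_prod (n a b : ℕ) :
    wsignR n a b = ∏ j ∈ range n, (-1 : ℝ) ^ (a.testBit j && b.testBit j).toNat :=
  (prod_pow_eq_pow_sum _ _ _).symm

theorem wsignR_comm (n a b : ℕ) : wsignR n a b = wsignR n b a := by
  simp only [wsignR, Bool.and_comm]

theorem wsignR_zero_right (n a : ℕ) : wsignR n a 0 = 1 := by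
  simp [wsignR]

theorem wsignR_xor_left (n a b c : ℕ) :
    wsignR n (a ^^^ b) c = wsignR n a c * wsignR n b c := by
  simp only [wsignR_eq_prod, ← prod_mul_distrib, Nat.testBit_xor]
  refine prod_congr rfl fun j _ => ?_
  cases a.testBit j <;> cases b.testBit j <;> cases c.testBit j <;> norm_num

theorem wsignR_xor_right (n a b c : ℕ) :
    wsignR n a (b ^^^ c) = wsignR n a b * wsignR n a c := by
  simp only [wsignR_comm n a, wsignR_xor_left]

theorem wsignR_two_pow_left {n j d : ℕ} (hj : j < n) (hd : d.testBit j) :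
    wsignR n (2 ^ j) d = -1 := by
  rw [wsignR_eq_prod, prod_eq_single_of_mem j (mem_range.2 hj)]
  · simp [Nat.testBit_two_pow_self, hd]
  · intro k _ hkj
    simp [Nat.testBit_two_pow_of_ne (Ne.symm hkj)]

theorem wsignR_eq_one_sub_two_mul_bip (n a b : ℕ) :
    wsignR n a b = 1 - 2 * (bip n a b : ℝ) := by
  unfold wsignR bip
  rcases Nat.even_or_odd (∑ j ∈ range n, (a.testBit j && b.testBit j).toNat) with h | h
  · rw [h.neg_one_pow, Nat.even_iff.1 h]; norm_num
  · rw [h.neg_one_pow, Nat.odd_iff.1 h]; norm_num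

theorem bip_zero_right (n a : ℕ) : bip n a 0 = 0 := by
  simp [bip]

theorem sum_wsignR (n : ℕ) (d : Fin (2 ^ n)) :
    ∑ ω : Fin (2 ^ n), wsignR n ω d = if d = 0 then 2 ^ n else 0 := by
  split_ifs with hd
  · simp [hd, wsignR_zero_right]
  obtain ⟨j, hj⟩ := Nat.exists_testBit_of_ne_zero (Fin.val_ne_zero_iff.2 hd)
  have hjn : j < n := by
    by_contra! h
    rw [Nat.testBit_eq_false_of_lt (d.isLt.trans_le (Nat.pow_le_pow_right two_pos h))] at hj
    exact absurd hj Bool.false_ne_true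
  -- Flipping bit `j` of `ω` is a bijection that negates every summand.
  let e : Fin (2 ^ n) := ⟨2 ^ j, Nat.pow_lt_pow_right one_lt_two hjn⟩
  have hflip : ∀ ω : Fin (2 ^ n), wsignR n ↑(e ^^^ ω) d = -wsignR n ω d := fun ω => by
    rw [Fin.xor_val_of_two_pow, wsignR_xor_left, wsignR_two_pow_left hjn hj, neg_one_mul]
  have := Equiv.sum_comp (Equiv.xor e) (fun ω : Fin (2 ^ n) => wsignR n ω d)
  simp only [Equiv.xor_apply, hflip, sum_neg_distrib] at this
  linarith

theorem sum_wsignR_mul_sum_wsignR_mul (n : ℕ) (f : Fin (2 ^ n) → ℝ) (c : Fin (2 ^ n)) :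
    ∑ ω : Fin (2 ^ n), wsignR n c ω * ∑ i : Fin (2 ^ n), wsignR n ω i * f i = 2 ^ n * f c := by
  calc _ = ∑ i : Fin (2 ^ n), (∑ ω : Fin (2 ^ n), wsignR n ω ↑(c ^^^ i)) * f i := by
          simp only [mul_sum, sum_mul, Fin.xor_val_of_two_pow, wsignR_xor_right, wsignR_comm n c]
          rw [sum_comm]
          exact sum_congr rfl fun _ _ => sum_congr rfl fun _ _ => by ring
    _ = 2 ^ n * f c := by simp only [sum_wsignR, xor_eq_zero_iff, ite_mul, zero_mul]; simp

theorem phase_add_sum_mul_bip {n : ℕ} {χ X Y : Fin (2 ^ n) → ℝ}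
    (hX : ∀ ω : Fin (2 ^ n), X ω = ∑ i : Fin (2 ^ n), wsignR n (ω : ℕ) (i : ℕ) * χ i)
    (hY0 : Y 0 = (2 ^ n : ℝ)⁻¹ * ∑ ω : Fin (2 ^ n), X ω)
    (hY : ∀ ω : Fin (2 ^ n), ω ≠ 0 → Y ω = -(2 / 2 ^ n : ℝ) * X ω) (c : Fin (2 ^ n)) :
    Y 0 + ∑ ω : Fin (2 ^ n), Y ω * bip n c ω = χ c := by
  have hYω (ω : Fin (2 ^ n)) : Y ω * bip n c ω = -(2 / 2 ^ n : ℝ) * X ω * bip n c ω := by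
    rcases eq_or_ne ω 0 with rfl | hω
    · simp [bip_zero_right]
    · rw [hY ω hω]
  calc _ = (2 ^ n : ℝ)⁻¹ * ∑ ω : Fin (2 ^ n), wsignR n c ω * X ω := by
        simp only [hYω, hY0, wsignR_eq_one_sub_two_mul_bip, mul_sum, ← sum_add_distrib]
        exact sum_congr rfl fun _ _ => by ring
    _ = χ c := by
        simp only [hX, sum_wsignR_mul_sum_wsignR_mul]
        field_simp

end Walsh

/-- any diagonal unitary `Λ(χ) = ∑_c e^{iχ_c}|c⟩⟨c|` factors as the
global phase `e^{iY_0}` times the product over nonzero `ω` of the diagonal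
operators `∑_c e^{i Y_ω [c·ω = 1]} |c⟩⟨c|`, with `X_ω = ∑_i (−1)^{ω·i} χ_i`,
`Y_0 = (1/2^n) ∑_ω X_ω`, `Y_ω = −(2/2^n) X_ω` for `ω ≠ 0`. -/
theorem stmt10 {n : ℕ} (χ X Y : Fin (2 ^ n) → ℝ)
    (hX : ∀ ω : Fin (2 ^ n), X ω = ∑ i : Fin (2 ^ n), wsignR n (ω : ℕ) (i : ℕ) * χ i)
    (hY0 : Y 0 = (2 ^ n : ℝ)⁻¹ * ∑ ω : Fin (2 ^ n), X ω)
    (hY : ∀ ω : Fin (2 ^ n), ω ≠ 0 → Y ω = -(2 / 2 ^ n : ℝ) * X ω) :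
    Matrix.diagonal (fun c : Fin (2 ^ n) => Complex.exp (Complex.I * (χ c : ℂ))) =
      Complex.exp (Complex.I * (Y 0 : ℂ)) •
        (((List.finRange (2 ^ n)).filter (fun ω => ω ≠ 0)).map
          (fun ω : Fin (2 ^ n) =>
            Matrix.diagonal (fun c : Fin (2 ^ n) =>
              Complex.exp (Complex.I * (Y ω : ℂ) * (bip n (c : ℕ) (ω : ℕ) : ℂ))))).prod := by
  rw [Matrix.list_prod_map_diagonal, ← diagonal_smul]
  congr 1
  funext c
  rw [Pi.smul_apply, smul_eq_mul,
    List.prod_map_filter_ne_of_eq_one _ (by simp [Walsh.bip_zero_right]), ← Fin.prod_univ_def,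
    ← Complex.exp_sum, ← Complex.exp_add, ← Walsh.phase_add_sum_mul_bip hX hY0 hY c]
  push_cast
  rw [mul_add, Finset.mul_sum]
  simp only [mul_assoc]
end
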